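/- For m > 0 and all A ≥ 36π m², one has φ_m(A) − (2/3) A φ_m′(A) > 0. -/

import Mathlib

/-- Area of the coordinate sphere of radius `r` in the Schwarzschild manifold of
mass `m`, in isotropic coordinates: `A_m(r) = 4π r² (1 + m/(2r))⁴`. -/
noncomputable def schwA (m r : ℝ) : ℝ := 4 * Real.pi * r ^ 2 * (1 + m / (2 * r)) ^ 4

/-- Volume enclosed between the horizon `r = m/2` and the coordinate sphere of radius `r`
in the Schwarzschild manifold of mass `m`:
`V_m(r) = ∫_{m/2}^r 4π ρ² (1 + m/(2ρ))⁶ dρ`. -/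
noncomputable def schwV (m r : ℝ) : ℝ :=
  ∫ ρ in (m / 2)..r, 4 * Real.pi * ρ ^ 2 * (1 + m / (2 * ρ)) ^ 6

/-- The Schwarzschild isoperimetric profile of mass `m`: `φ_m = V_m ∘ A_m⁻¹`, where
`A_m⁻¹ : [16πm², ∞) → [m/2, ∞)` is the inverse of the (bijective, strictly increasing)
area function `A_m : [m/2, ∞) → [16πm², ∞)`. -/
noncomputable def schwPhi (m A : ℝ) : ℝ :=
  schwV m (Function.invFunOn (schwA m) (Set.Ici (m / 2)) A)
/-!
Write `r` for the radius with `A_m(r) = A`. The volume `V_m` has an elementary primitive, so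
`φ_m(A) = V_m(r)` is explicit, and the inverse function theorem gives
`φ_m'(A) = V_m'(r) / A_m'(r) = (2r + m)³ / (8r(2r - m))`. Since `A_m(r) = π(2r + m)⁴/(4r²)`, the
hypothesis `A ≥ 36πm²` reads `(2r + m)² ≥ 12mr`, which on `r ≥ m/2` forces `r ≥ 7m/4`. There
`log(2r/m) ≥ 1`, and what remains is the positivity of a quintic in `r` whose Taylor coefficients
at `r = 7m/4` are all positive.
-/
open Real Set Filter Topology

lemma schwA_eq (m r : ℝ) : schwA m r = π * (2 * r + m) ^ 4 / (4 * r ^ 2) := by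
  rcases eq_or_ne r 0 with rfl | hr
  · simp [schwA]
  · unfold schwA; field_simp; ring

lemma schwA_half (m : ℝ) : schwA m (m / 2) = 16 * π * m ^ 2 := by
  rcases eq_or_ne m 0 with rfl | hm
  · simp [schwA]
  · rw [schwA_eq]; field_simp; ring

lemma hasDerivAt_schwA (m : ℝ) {r : ℝ} (hr : r ≠ 0) :
    HasDerivAt (schwA m) (π * (2 * r + m) ^ 3 * (2 * r - m) / (2 * r ^ 3)) r := by
  have hnum := ((((hasDerivAt_id r).const_mul 2).add_const m).pow 4).const_mul π
  have hden := (hasDerivAt_pow 2 r).const_mul 4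
  rw [funext (schwA_eq m)]
  refine (hnum.div hden (by positivity)).congr_deriv ?_
  simp only [id, Pi.pow_apply]
  field_simp
  ring

lemma strictMonoOn_schwA {m : ℝ} (hm : 0 < m) : StrictMonoOn (schwA m) (Ici (m / 2)) := by
  refine strictMonoOn_of_deriv_pos (convex_Ici _) (fun x hx => ?_) (fun x hx => ?_)
  · have hx0 : x ≠ 0 := by linarith [mem_Ici.1 hx]
    exact (hasDerivAt_schwA m hx0).continuousAt.continuousWithinAt
  · rw [interior_Ici, mem_Ioi] at hx
    have hx0 : 0 < x := by linarith
    rw [(hasDerivAt_schwA m hx0.ne').deriv]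
    have : 0 < 2 * x - m := by linarith
    positivity

/-- With `s = √(A / 4π)`, the equation `A_m(r) = A` reads `4r² - 4(s - m)r + m² = 0`;
this is its larger root. -/
noncomputable def schwRadius (m A : ℝ) : ℝ :=
  (√(A / (4 * π)) - m + √((√(A / (4 * π)) - m) ^ 2 - m ^ 2)) / 2

lemma continuous_schwRadius (m : ℝ) : Continuous (schwRadius m) := by
  unfold schwRadius; fun_prop

lemma schwRadius_spec {m A : ℝ} (hm : 0 < m) (hA : 16 * π * m ^ 2 ≤ A) :
    m / 2 ≤ schwRadius m A ∧ schwA m (schwRadius m A) = A := by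
  set s := √(A / (4 * π))
  have hA0 : 0 ≤ A := (by positivity : 0 ≤ 16 * π * m ^ 2).trans hA
  have hs2 : s ^ 2 = A / (4 * π) := sq_sqrt (by positivity)
  have hs : 2 * m ≤ s := by
    rw [show 2 * m = √((2 * m) ^ 2) by rw [sqrt_sq (by linarith)]]
    exact sqrt_le_sqrt (by rw [le_div_iff₀ (by positivity)]; linarith)
  set d := √((s - m) ^ 2 - m ^ 2)
  have hd2 : d ^ 2 = (s - m) ^ 2 - m ^ 2 := sq_sqrt (by nlinarith)
  have hd : 0 ≤ d := sqrt_nonneg _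
  have hr : schwRadius m A = (s - m + d) / 2 := rfl
  refine ⟨by rw [hr]; linarith, ?_⟩
  have hsq : (2 * schwRadius m A + m) ^ 2 = 4 * s * schwRadius m A := by
    rw [hr]; linear_combination hd2
  have hr0 : 0 < schwRadius m A := by rw [hr]; linarith
  calc schwA m (schwRadius m A)
      = π * ((2 * schwRadius m A + m) ^ 2) ^ 2 / (4 * schwRadius m A ^ 2) := by
        rw [schwA_eq]; ring
    _ = 4 * π * s ^ 2 := by rw [hsq]; field_simp
    _ = A := by rw [hs2]; field_simp

lemma invFunOn_schwA {m A : ℝ} (hm : 0 < m) (hA : 16 * π * m ^ 2 ≤ A) :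
    Function.invFunOn (schwA m) (Ici (m / 2)) A = schwRadius m A := by
  obtain ⟨hmem, heq⟩ := schwRadius_spec hm hA
  have hex : ∃ r ∈ Ici (m / 2), schwA m r = A := ⟨_, hmem, heq⟩
  exact (strictMonoOn_schwA hm).injOn (Function.invFunOn_mem hex) hmem
    ((Function.invFunOn_eq hex).trans heq.symm)

lemma schwPhi_eq {m A : ℝ} (hm : 0 < m) (hA : 16 * π * m ^ 2 ≤ A) :
    schwPhi m A = schwV m (schwRadius m A) := by
  rw [schwPhi, invFunOn_schwA hm hA]

lemma half_lt_schwRadius {m A : ℝ} (hm : 0 < m) (hA : 16 * π * m ^ 2 < A) :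
    m / 2 < schwRadius m A := by
  obtain ⟨hle, heq⟩ := schwRadius_spec hm hA.le
  refine hle.lt_of_ne fun h => hA.ne ?_
  rw [← heq, ← h, schwA_half m]

lemma hasDerivAt_schwRadius {m A : ℝ} (hm : 0 < m) (hA : 16 * π * m ^ 2 < A) :
    HasDerivAt (schwRadius m)
      (π * (2 * schwRadius m A + m) ^ 3 * (2 * schwRadius m A - m) /
        (2 * schwRadius m A ^ 3))⁻¹ A := by
  have hr := half_lt_schwRadius hm hA
  refine HasDerivAt.of_local_left_inverse (continuous_schwRadius m).continuousAt
    (hasDerivAt_schwA m (by linarith)) ?_ ?_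
  · have : 0 < 2 * schwRadius m A - m := by linarith
    have : 0 < schwRadius m A := by linarith
    positivity
  · filter_upwards [Ioi_mem_nhds hA] with y hy using (schwRadius_spec hm hy.le).2

noncomputable def schwVPrimitive (m x : ℝ) : ℝ :=
  π * (4 / 3 * x ^ 3 + 6 * m * x ^ 2 + 15 * m ^ 2 * x + 10 * m ^ 3 * log (2 * x / m)
    - 15 * m ^ 4 / (4 * x) - 3 * m ^ 5 / (8 * x ^ 2) - m ^ 6 / (48 * x ^ 3))

lemma schwVPrimitive_half (m : ℝ) : schwVPrimitive m (m / 2) = 0 := by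
  rcases eq_or_ne m 0 with rfl | hm
  · simp [schwVPrimitive]
  have : 2 * (m / 2) / m = 1 := by field_simp
  rw [schwVPrimitive, this, log_one]
  field_simp
  ring

lemma hasDerivAt_schwVPrimitive {m x : ℝ} (hm : m ≠ 0) (hx : x ≠ 0) :
    HasDerivAt (schwVPrimitive m) (4 * π * x ^ 2 * (1 + m / (2 * x)) ^ 6) x := by
  have h3 := (hasDerivAt_pow 3 x).const_mul (4 / 3 : ℝ)
  have h2 := (hasDerivAt_pow 2 x).const_mul (6 * m)
  have h1 := (hasDerivAt_id' x).const_mul (15 * m ^ 2)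
  have hlog := ((((hasDerivAt_id' x).const_mul 2).div_const m).log
    (by positivity)).const_mul (10 * m ^ 3)
  have hinv1 := (hasDerivAt_const x (15 * m ^ 4)).div ((hasDerivAt_id' x).const_mul 4)
    (by positivity)
  have hinv2 := (hasDerivAt_const x (3 * m ^ 5)).div ((hasDerivAt_pow 2 x).const_mul 8)
    (by positivity)
  have hinv3 := (hasDerivAt_const x (m ^ 6)).div ((hasDerivAt_pow 3 x).const_mul 48)
    (by positivity)
  refine (((((((h3.add h2).add h1).add hlog).sub hinv1).sub hinv2).sub hinv3).const_mul
    π).congr_deriv ?_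
  field_simp
  ring

lemma schwV_eq {m r : ℝ} (hm : 0 < m) (hr : m / 2 ≤ r) : schwV m r = schwVPrimitive m r := by
  have hpos : ∀ x ∈ uIcc (m / 2) r, 0 < x := fun x hx => by
    rw [uIcc_of_le hr] at hx; linarith [hx.1]
  rw [schwV, intervalIntegral.integral_eq_sub_of_hasDerivAt
    (fun x hx => hasDerivAt_schwVPrimitive hm.ne' (hpos x hx).ne'), schwVPrimitive_half m,
    sub_zero]
  refine ContinuousOn.intervalIntegrable fun x hx => ContinuousAt.continuousWithinAt ?_
  have := hpos x hx
  fun_prop (disch := positivity)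

lemma hasDerivAt_schwV {m r : ℝ} (hm : 0 < m) (hr : m / 2 < r) :
    HasDerivAt (schwV m) (4 * π * r ^ 2 * (1 + m / (2 * r)) ^ 6) r :=
  (hasDerivAt_schwVPrimitive hm.ne' (by linarith)).congr_of_eventuallyEq <| by
    filter_upwards [Ioi_mem_nhds hr] with x hx using schwV_eq hm hx.le

lemma hasDerivAt_schwPhi {m A : ℝ} (hm : 0 < m) (hA : 16 * π * m ^ 2 < A) :
    HasDerivAt (schwPhi m)
      ((2 * schwRadius m A + m) ^ 3 / (8 * schwRadius m A * (2 * schwRadius m A - m))) A := by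
  have hr := half_lt_schwRadius hm hA
  have hEq : schwPhi m =ᶠ[𝓝 A] schwV m ∘ schwRadius m := by
    filter_upwards [Ioi_mem_nhds hA] with y hy using schwPhi_eq hm hy.le
  refine (((hasDerivAt_schwV hm hr).comp A (hasDerivAt_schwRadius hm hA)).congr_deriv
    ?_).congr_of_eventuallyEq hEq
  have : 2 * schwRadius m A - m ≠ 0 := by linarith
  have : schwRadius m A ≠ 0 := by linarith
  field_simp
  ring

lemma seven_quarters_le_of_le_schwA {m r : ℝ} (hm : 0 < m) (hr : m / 2 ≤ r)
    (hA : 36 * π * m ^ 2 ≤ schwA m r) : 7 / 4 * m ≤ r := by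
  have hr0 : 0 < r := by linarith
  rw [schwA_eq, le_div_iff₀ (by positivity)] at hA
  have hsq : (12 * m * r) ^ 2 ≤ ((2 * r + m) ^ 2) ^ 2 := by nlinarith [pi_pos]
  have h := (pow_le_pow_iff_left₀ (by positivity) (by positivity) two_ne_zero).1 hsq
  nlinarith

lemma quintic_pos_of_seven_quarters_le {m r : ℝ} (hm : 0 < m) (hr : 7 / 4 * m ≤ r) :
    0 < 32 * r ^ 5 + 240 * r ^ 4 * m - 160 * r ^ 3 * m ^ 2 - 560 * r ^ 2 * m ^ 3
      + 30 * r * m ^ 4 + m ^ 5 := by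
  obtain ⟨t, ht, rfl⟩ : ∃ t, 0 ≤ t ∧ r = t + 7 / 4 * m := ⟨r - 7 / 4 * m, by linarith, by ring⟩
  nlinarith [pow_pos hm 5, mul_nonneg ht (pow_nonneg hm.le 4),
    mul_nonneg (pow_nonneg ht 2) (pow_nonneg hm.le 3),
    mul_nonneg (pow_nonneg ht 3) (pow_nonneg hm.le 2), mul_nonneg (pow_nonneg ht 4) hm.le,
    pow_nonneg ht 5]

lemma two_thirds_mul_lt_schwVPrimitive {m r : ℝ} (hm : 0 < m) (hr : 7 / 4 * m ≤ r) :
    2 / 3 * schwA m r * ((2 * r + m) ^ 3 / (8 * r * (2 * r - m))) < schwVPrimitive m r := by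
  have hr0 : 0 < r := by linarith
  have hrm : 0 < 2 * r - m := by linarith
  have hlog : 1 ≤ log (2 * r / m) := by
    rw [le_log_iff_exp_le (by positivity), le_div_iff₀ hm]
    nlinarith [exp_one_lt_three]
  have key : schwVPrimitive m r - 2 / 3 * schwA m r * ((2 * r + m) ^ 3 / (8 * r * (2 * r - m)))
      = π * (m * (32 * r ^ 5 + 240 * r ^ 4 * m - 160 * r ^ 3 * m ^ 2 - 560 * r ^ 2 * m ^ 3
        + 30 * r * m ^ 4 + m ^ 5) / (24 * r ^ 2 * (2 * r - m))
        + 10 * m ^ 3 * (log (2 * r / m) - 1)) := by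
    have : r * 2 - m ≠ 0 := by linarith
    rw [schwVPrimitive, schwA_eq]
    field_simp
    ring
  rw [← sub_pos, key]
  exact mul_pos pi_pos (add_pos_of_pos_of_nonneg
    (div_pos (mul_pos hm (quintic_pos_of_seven_quarters_le hm hr)) (by positivity))
    (mul_nonneg (by positivity) (sub_nonneg.2 hlog)))

/-- For `m > 0` and `A ≥ 36πm²`, `φ_m(A) − (2/3) A φ_m′(A) > 0`. -/
theorem schwPhi_aux_pos (m : ℝ) (hm : 0 < m) :
    ∀ A : ℝ, 36 * Real.pi * m ^ 2 ≤ A →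
      0 < schwPhi m A - 2 / 3 * A * deriv (schwPhi m) A := by
  intro A hA
  have h16 : 16 * π * m ^ 2 < A := by
    have : 0 < π * m ^ 2 := by positivity
    linarith
  obtain ⟨hr, hAr⟩ := schwRadius_spec hm h16.le
  have h := two_thirds_mul_lt_schwVPrimitive hm
    (seven_quarters_le_of_le_schwA hm hr (by rwa [hAr]))
  rw [hAr] at h
  rwa [(hasDerivAt_schwPhi hm h16).deriv, schwPhi_eq hm h16.le, schwV_eq hm hr, sub_pos]
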